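/- Let n be even with n > 7, let γ = (2, 3, 5, 4) and δ = (2, 3, ..., n) be permutations of {1, ..., n}, and set ρ = δγδ⁻¹γδ⁻¹γ⁻¹δγ⁻¹. Then the three permutations (δγ⁻¹)², ρ, and (γδ⁻¹)⁻¹ρ(γδ⁻¹) generate the alternating group on {2, ..., n}. -/

import Mathlib

/-
All three generators are even, and since `γ` and `δ` fix `0` and `1`, so do they; this gives one
inclusion. For the other, write `a = (γ⁻¹δ)²`, `ρ` and `c = (δ⁻¹γ) ρ (δ⁻¹γ)⁻¹` for the generators
(Lean's composition, rightmost factor first). A table of values shows `ρ = (2 4 6 5)(3 n)` and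
`c = (2 n 5 3)(4 n-1)`, so `ρ * c * c = (4 6 5)`, and conjugating by `ρ` gives `(2 6 5)`.
The permutation `a` is `(3 6 8 ⋯ n)(4 5 7 ⋯ n-1)`, so conjugating `(4 6 5)` by powers of `a` gives
the 3-cycles `(2m+5, 2m+8, 2m+7)`, and finally `(n-1, 3, 4)` because `n` is even. These fix `2`
and `6`, so conjugating `(2 6 5)` by them moves its last point through all of `{3, …, n} \ {6}`.
The 3-cycles `(2 6 x)` generate the alternating group on `{2, …, n}`.
-/

open Fin.NatCast

open Equiv Equiv.Perm Subgroup

namespace Equiv.Perm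

variable {α : Type*} [DecidableEq α]

/-- The 3-cycle `a ↦ b ↦ c ↦ a` (when `a`, `b`, `c` are distinct). -/
def threeCycle (a b c : α) : Perm α := swap a b * swap b c

section threeCycle

variable {a b c x : α}

theorem threeCycle_apply_left (hab : a ≠ b) (hac : a ≠ c) : threeCycle a b c a = b := by
  simp [threeCycle, swap_apply_of_ne_of_ne hab hac]

theorem threeCycle_apply_mid (hcb : c ≠ b) (hca : c ≠ a) : threeCycle a b c b = c := by
  simp [threeCycle, swap_apply_of_ne_of_ne hca hcb]

theorem threeCycle_apply_right : threeCycle a b c c = a := by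
  simp [threeCycle]

theorem threeCycle_apply_of_ne (hxa : x ≠ a) (hxb : x ≠ b) (hxc : x ≠ c) :
    threeCycle a b c x = x := by
  simp [threeCycle, swap_apply_of_ne_of_ne, hxa, hxb, hxc]

theorem threeCycle_inv (a b c : α) : (threeCycle a b c)⁻¹ = threeCycle c b a := by
  simp [threeCycle, swap_comm]

theorem mul_threeCycle_mul_inv (g : Perm α) (a b c : α) :
    g * threeCycle a b c * g⁻¹ = threeCycle (g a) (g b) (g c) := by
  simp only [threeCycle, swap_apply_apply]
  group

theorem threeCycle_rotate (hab : a ≠ b) (hbc : b ≠ c) (hca : c ≠ a) :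
    threeCycle a b c = threeCycle b c a := by
  ext x
  simp only [threeCycle, Perm.mul_apply, swap_apply_def]
  split_ifs <;> simp_all

theorem threeCycle_eq_mul {p : α} (hpa : p ≠ a) (hpb : p ≠ b) :
    threeCycle a b c = threeCycle p a b * threeCycle p b c := by
  have h : swap p a * swap a b * swap p b = swap a b := by
    rw [mul_swap_eq_swap_mul]
    simp [swap_apply_of_ne_of_ne hpa hpb, swap_comm a p, ← mul_assoc]
  simp only [threeCycle, ← mul_assoc, h]

theorem ofSubtype_threeCycle {p : α → Prop} [DecidablePred p] (a b c : Subtype p) :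
    ofSubtype (threeCycle a b c) = threeCycle (a : α) b c := by
  simp only [threeCycle, map_mul, ofSubtype_swap_eq]

end threeCycle

section Subgroup

variable {H : Subgroup (Perm α)} {a b c : α}

theorem threeCycle_conj_mem {g : Perm α} (hg : g ∈ H) (h : threeCycle a b c ∈ H) :
    threeCycle (g a) (g b) (g c) ∈ H := by
  rw [← mul_threeCycle_mul_inv]
  exact mul_mem (mul_mem hg h) (inv_mem hg)

theorem threeCycle_mem_of_hub {p q x y z : α} (hnd : [p, q, x, y, z].Nodup)
    (hxyz : threeCycle x y z ∈ H) (h : threeCycle p q x ∈ H) :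
    threeCycle p q y ∈ H ∧ threeCycle p q z ∈ H := by
  simp only [List.nodup_cons, List.mem_cons, List.not_mem_nil, or_false, not_or,
    List.nodup_nil, and_true] at hnd
  obtain ⟨⟨hpq, hpx, hpy, hpz⟩, ⟨hqx, hqy, hqz⟩, ⟨hxy, hxz⟩, hyz⟩ := hnd
  constructor
  · have h' := threeCycle_conj_mem hxyz h
    rwa [threeCycle_apply_of_ne hpx hpy hpz, threeCycle_apply_of_ne hqx hqy hqz,
      threeCycle_apply_left hxy hxz] at h'
  · have h' := threeCycle_conj_mem (inv_mem hxyz) h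
    rwa [threeCycle_inv, threeCycle_apply_of_ne hpz hpy hpx, threeCycle_apply_of_ne hqz hqy hqx,
      threeCycle_apply_right] at h'

variable {s : Set α} {p q : α}

theorem threeCycle_pivot_mem (hpq : p ≠ q)
    (h : ∀ x ∈ s, x ≠ p → x ≠ q → threeCycle p q x ∈ H) {x y : α} (hx : x ∈ s) (hy : y ∈ s)
    (hxp : x ≠ p) (hyp : y ≠ p) (hxy : x ≠ y) : threeCycle p x y ∈ H := by
  rcases eq_or_ne x q with rfl | hxq
  · exact h y hy hyp hxy.symm
  rcases eq_or_ne y q with rfl | hyq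
  · rw [threeCycle_rotate hxp.symm hxy hpq.symm, ← threeCycle_inv]
    exact inv_mem (h x hx hxp hxq)
  have h' := threeCycle_conj_mem (inv_mem (h y hy hyp hyq)) (h x hx hxp hxq)
  rwa [threeCycle_inv, threeCycle_apply_right, threeCycle_apply_mid hpq hyp.symm,
    threeCycle_apply_of_ne hxy hxq hxp, threeCycle_rotate hyp hxp.symm hxy] at h'

theorem threeCycle_mem_of_pivot (hpq : p ≠ q)
    (h : ∀ x ∈ s, x ≠ p → x ≠ q → threeCycle p q x ∈ H) (ha : a ∈ s) (hb : b ∈ s) (hc : c ∈ s)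
    (hab : a ≠ b) (hbc : b ≠ c) (hca : c ≠ a) : threeCycle a b c ∈ H := by
  rcases eq_or_ne a p with rfl | hap
  · exact threeCycle_pivot_mem hpq h hb hc hab.symm hca hbc
  rcases eq_or_ne b p with rfl | hbp
  · rw [threeCycle_rotate hab hbc hca]
    exact threeCycle_pivot_mem hpq h hc ha hbc.symm hab hca
  rcases eq_or_ne c p with rfl | hcp
  · rw [threeCycle_rotate hab hbc hca, threeCycle_rotate hbc hca hab]
    exact threeCycle_pivot_mem hpq h ha hb hap hbp hab
  rw [threeCycle_eq_mul hap.symm hbp.symm]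
  exact mul_mem (threeCycle_pivot_mem hpq h ha hb hap hbp hab)
    (threeCycle_pivot_mem hpq h hb hc hbp hcp hbc)

theorem alternatingGroup_inf_fixingSubgroup_le [Fintype α] [DecidablePred (· ∈ s)]
    (hpq : p ≠ q) (h : ∀ x ∉ s, x ≠ p → x ≠ q → threeCycle p q x ∈ H) :
    alternatingGroup α ⊓ fixingSubgroup (Perm α) s ≤ H := by
  rintro σ ⟨hsign, hfix⟩
  replace hfix : ∀ x ∈ s, σ x = x := (mem_fixingSubgroup_iff _).mp hfix
  have hs : ∀ x, σ x ∉ s ↔ x ∉ s := fun x => by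
    by_cases hx : x ∈ s
    · rw [hfix x hx]
    · refine iff_of_true (fun h => hx ?_) hx
      rwa [← σ.injective (hfix _ h)]
  have hmoved : ∀ x, σ x ≠ x → x ∉ s := fun x hx hxs => hx (hfix x hxs)
  have halt : σ.subtypePerm hs ∈ alternatingGroup {x // x ∉ s} := by
    rwa [mem_alternatingGroup, sign_subtypePerm _ hs hmoved]
  rw [← closure_three_cycles_eq_alternating] at halt
  rw [← ofSubtype_subtypePerm hs hmoved]
  refine (closure_le (H.comap ofSubtype)).mpr ?_ halt
  intro υ hυ
  obtain ⟨u, hu⟩ := hυ.isCycle.nonempty_support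
  have hnodup := hυ.nodup_iff_mem_support.mpr hu
  simp only [List.nodup_cons, List.mem_cons, List.not_mem_nil, or_false, not_or] at hnodup
  obtain ⟨⟨h01, h02⟩, h12, -⟩ := hnodup
  rw [SetLike.mem_coe, mem_comap, hυ.eq_swap_mul_swap_iff_mem_support.mpr hu]
  change ofSubtype (threeCycle u (υ u) (υ (υ u))) ∈ H
  rw [ofSubtype_threeCycle]
  exact threeCycle_mem_of_pivot (s := sᶜ) hpq h u.2 (υ u).2 (υ (υ u)).2
    (Subtype.coe_injective.ne h01) (Subtype.coe_injective.ne h12)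
    (Subtype.coe_injective.ne h02).symm

end Subgroup

/-- The word `δγδ⁻¹γδ⁻¹γ⁻¹δγ⁻¹` of the paper, which composes from left to right. -/
def rho (γ δ : Perm α) : Perm α := γ⁻¹ * δ * γ⁻¹ * δ⁻¹ * γ * δ⁻¹ * γ * δ

theorem sign_rho [Fintype α] (γ δ : Perm α) : sign (rho γ δ) = 1 := by
  rcases Int.units_eq_one_or (sign γ) with h | h <;>
    rcases Int.units_eq_one_or (sign δ) with h' | h' <;> simp [rho, h, h']

theorem closure_le_alternatingGroup_inf_fixingSubgroup [Fintype α] {s : Set α} {γ δ : Perm α}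
    (hγ : γ ∈ fixingSubgroup (Perm α) s) (hδ : δ ∈ fixingSubgroup (Perm α) s) :
    closure {(γ⁻¹ * δ) ^ 2, rho γ δ, (δ⁻¹ * γ) * rho γ δ * (δ⁻¹ * γ)⁻¹} ≤
      alternatingGroup α ⊓ fixingSubgroup (Perm α) s := by
  have hq : δ⁻¹ * γ ∈ fixingSubgroup (Perm α) s := mul_mem (inv_mem hδ) hγ
  have hρ : rho γ δ ∈ fixingSubgroup (Perm α) s := by
    simp only [rho, mul_mem_cancel_right hδ, mul_mem_cancel_right hγ,
      mul_mem_cancel_right (inv_mem hδ), mul_mem_cancel_right (inv_mem hγ), inv_mem hγ]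
  rw [closure_le]
  simp only [Set.insert_subset_iff, Set.singleton_subset_iff, SetLike.mem_coe, mem_inf,
    mem_alternatingGroup]
  refine ⟨⟨?_, pow_mem (mul_mem (inv_mem hγ) hδ) 2⟩, ⟨sign_rho γ δ, hρ⟩,
    ⟨?_, mul_mem (mul_mem hq hρ) (inv_mem hq)⟩⟩
  · rw [map_pow, Int.units_sq]
  · exact mem_alternatingGroup.mp
      (alternatingGroup.normal.conj_mem _ (mem_alternatingGroup.mpr (sign_rho γ δ)) _)

end Equiv.Perm

namespace Fin

theorem natCast_eq_natCast_iff_of_le {n i j : ℕ} (hi : i ≤ n) (hj : j ≤ n) :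
    (i : Fin (n + 1)) = j ↔ i = j := by
  rw [Fin.ext_iff, Fin.val_cast_of_lt (by omega), Fin.val_cast_of_lt (by omega)]

theorem exists_natCast_eq {n : ℕ} (x : Fin (n + 1)) : ∃ i ≤ n, (i : Fin (n + 1)) = x :=
  ⟨x.val, Nat.lt_succ_iff.mp x.isLt, Fin.cast_val_eq_self x⟩

theorem perm_ext_natCast {n : ℕ} {f g : Perm (Fin (n + 1))}
    (h : ∀ i ≤ n, f (i : Fin (n + 1)) = g i) : f = g :=
  Equiv.ext fun x => by
    obtain ⟨i, hi, rfl⟩ := exists_natCast_eq x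
    exact h i hi

theorem nodup_map_natCast {n : ℕ} {l : List ℕ} (hl : l.Nodup) (hle : ∀ i ∈ l, i ≤ n) :
    (l.map ((↑) : ℕ → Fin (n + 1))).Nodup :=
  hl.map_on fun i hi j hj h => (natCast_eq_natCast_iff_of_le (hle i hi) (hle j hj)).mp h

end Fin

section Generators

variable {n : ℕ} {δ : Perm (Fin (n + 1))}

/-- The 4-cycle `γ = (2 3 5 4)` on `Fin (n + 1)`. -/
def gammaCycle (n : ℕ) : Perm (Fin (n + 1)) :=
  swap ((2 : ℕ) : Fin (n + 1)) (3 : ℕ) * swap ((3 : ℕ) : Fin (n + 1)) (5 : ℕ) *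
    swap ((5 : ℕ) : Fin (n + 1)) (4 : ℕ)

theorem eq_gammaCycle (hn : 5 ≤ n) {γ : Perm (Fin (n + 1))} (hγ₁ : γ 2 = 3) (hγ₂ : γ 3 = 5)
    (hγ₃ : γ 5 = 4) (hγ₄ : γ 4 = 2)
    (hγ₅ : ∀ x : Fin (n + 1), x ∉ ({2, 3, 4, 5} : Set (Fin (n + 1))) → γ x = x) :
    γ = gammaCycle n := by
  simp only [← Nat.cast_ofNat (R := Fin (n + 1)), Set.mem_insert_iff, Set.mem_singleton_iff]
    at hγ₁ hγ₂ hγ₃ hγ₄ hγ₅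
  have hγ₅' : ∀ i ≤ n, i ≠ 2 → i ≠ 3 → i ≠ 4 → i ≠ 5 → γ i = i := fun i hi h2 h3 h4 h5 =>
    hγ₅ _ (by simp (disch := omega) only [Fin.natCast_eq_natCast_iff_of_le]; omega)
  refine Fin.perm_ext_natCast fun i hi => ?_
  rcases (by omega : i = 2 ∨ i = 3 ∨ i = 4 ∨ i = 5 ∨ (i ≠ 2 ∧ i ≠ 3 ∧ i ≠ 4 ∧ i ≠ 5)) with
    rfl | rfl | rfl | rfl | ⟨h2, h3, h4, h5⟩ <;>
    simp (disch := omega) only [hγ₁, hγ₂, hγ₃, hγ₄, hγ₅', gammaCycle, Perm.mul_apply,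
      swap_apply_def, Fin.natCast_eq_natCast_iff_of_le, if_neg, if_true]

theorem gammaCycle_mem_fixingSubgroup (hn : 5 ≤ n) :
    gammaCycle n ∈ fixingSubgroup (Perm (Fin (n + 1))) {x : Fin (n + 1) | x.val < 2} := by
  refine (mem_fixingSubgroup_iff _).mpr fun x (hx : x.val < 2) => ?_
  obtain ⟨i, hi, rfl⟩ := Fin.exists_natCast_eq x
  rw [Fin.val_cast_of_lt (by omega)] at hx
  simp (disch := omega) only [Perm.smul_def, gammaCycle, Perm.mul_apply, swap_apply_def,
    Fin.natCast_eq_natCast_iff_of_le, if_neg]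

theorem inv_apply_natCast_eq_sub_one (hδ : ∀ i : ℕ, 2 ≤ i → i < n → δ i = (i + 1 : ℕ)) {i : ℕ}
    (h3 : 3 ≤ i) (hi : i ≤ n) : δ⁻¹ i = (i - 1 : ℕ) := by
  rw [inv_eq_iff_eq, hδ (i - 1) (by omega) (by omega), Nat.sub_add_cancel (by omega)]

theorem gammaCycle_inv_mul_sq_apply (hn : 7 < n)
    (hδ : ∀ i : ℕ, 2 ≤ i → i < n → δ i = (i + 1 : ℕ)) (hδn : δ n = (2 : ℕ)) :
    (((gammaCycle n)⁻¹ * δ) ^ 2) (4 : ℕ) = (5 : ℕ) ∧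
      (∀ i : ℕ, 5 ≤ i → i + 2 ≤ n → (((gammaCycle n)⁻¹ * δ) ^ 2) i = (i + 2 : ℕ)) ∧
      (((gammaCycle n)⁻¹ * δ) ^ 2) (n - 1 : ℕ) = (4 : ℕ) ∧
      (((gammaCycle n)⁻¹ * δ) ^ 2) n = (3 : ℕ) := by
  refine ⟨?_, fun i h5 hi => ?_, ?_, ?_⟩ <;>
    simp (disch := omega) only [gammaCycle, sq, mul_inv_rev, swap_inv, Perm.mul_apply,
      swap_apply_def, Fin.natCast_eq_natCast_iff_of_le, if_neg, if_true, hδ, hδn, Nat.reduceAdd,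
      Nat.sub_add_cancel]

theorem rho_gammaCycle_eq (hn : 7 < n) (hδ : ∀ i : ℕ, 2 ≤ i → i < n → δ i = (i + 1 : ℕ))
    (hδn : δ n = (2 : ℕ)) (hδ₀ : ∀ x : Fin (n + 1), x.val < 2 → δ x = x) :
    rho (gammaCycle n) δ =
      swap ((2 : ℕ) : Fin (n + 1)) (4 : ℕ) * swap ((4 : ℕ) : Fin (n + 1)) (6 : ℕ) *
        swap ((6 : ℕ) : Fin (n + 1)) (5 : ℕ) * swap ((3 : ℕ) : Fin (n + 1)) n := by
  have hδ₀' : ∀ i : ℕ, i < 2 → δ i = i := fun i hi =>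
    hδ₀ _ (by rwa [Fin.val_cast_of_lt (by omega)])
  have hδ₀inv : ∀ i : ℕ, i < 2 → δ⁻¹ i = i := fun i hi => by rw [inv_eq_iff_eq, hδ₀' i hi]
  refine Fin.perm_ext_natCast fun i hi => ?_
  rcases (by omega : i < 2 ∨ i = 2 ∨ i = 3 ∨ i = 4 ∨ i = 5 ∨ i = 6 ∨ (7 ≤ i ∧ i < n) ∨ i = n)
    with h | rfl | rfl | rfl | rfl | rfl | ⟨h7, hin⟩ | rfl <;>
    simp (disch := omega) only [rho, gammaCycle, mul_inv_rev, swap_inv, Perm.mul_apply,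
      swap_apply_def, Fin.natCast_eq_natCast_iff_of_le, if_neg, if_true, hδ, hδn, hδ₀', hδ₀inv,
      inv_apply_natCast_eq_sub_one hδ, inv_eq_iff_eq.mpr hδn.symm, Nat.reduceAdd, Nat.reduceSub,
      Nat.add_sub_cancel, Nat.sub_add_cancel]

theorem inv_mul_gammaCycle_apply (hn : 7 < n)
    (hδ : ∀ i : ℕ, 2 ≤ i → i < n → δ i = (i + 1 : ℕ)) (hδn : δ n = (2 : ℕ)) :
    (δ⁻¹ * gammaCycle n) (2 : ℕ) = (2 : ℕ) ∧ (δ⁻¹ * gammaCycle n) (6 : ℕ) = (5 : ℕ) ∧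
      (δ⁻¹ * gammaCycle n) (4 : ℕ) = n ∧ (δ⁻¹ * gammaCycle n) (5 : ℕ) = (3 : ℕ) := by
  refine ⟨?_, ?_, ?_, ?_⟩ <;>
    simp (disch := omega) only [gammaCycle, Perm.mul_apply, swap_apply_def,
      Fin.natCast_eq_natCast_iff_of_le, if_neg, if_true, inv_apply_natCast_eq_sub_one hδ,
      inv_eq_iff_eq.mpr hδn.symm, Nat.reduceSub]

end Generators

section ThreeCycles

variable {n : ℕ} {H : Subgroup (Perm (Fin (n + 1)))}

theorem mul_conj_mul_conj_eq_threeCycle (hn : 6 < n) {ρ q : Perm (Fin (n + 1))}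
    (hρ : ρ = swap ((2 : ℕ) : Fin (n + 1)) (4 : ℕ) * swap ((4 : ℕ) : Fin (n + 1)) (6 : ℕ) *
        swap ((6 : ℕ) : Fin (n + 1)) (5 : ℕ) * swap ((3 : ℕ) : Fin (n + 1)) n)
    (hq : q (2 : ℕ) = (2 : ℕ) ∧ q (6 : ℕ) = (5 : ℕ) ∧ q (4 : ℕ) = n ∧ q (5 : ℕ) = (3 : ℕ)) :
    ρ * (q * ρ * q⁻¹) * (q * ρ * q⁻¹) = threeCycle ((4 : ℕ) : Fin (n + 1)) (6 : ℕ) (5 : ℕ) := by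
  obtain ⟨hq2, hq6, hq4, hq5⟩ := hq
  have hsq : ρ * ρ = swap ((2 : ℕ) : Fin (n + 1)) (6 : ℕ) * swap ((4 : ℕ) : Fin (n + 1)) (5 : ℕ) := by
    subst hρ
    refine Fin.perm_ext_natCast fun i hi => ?_
    rcases (by omega : i = 2 ∨ i = 3 ∨ i = 4 ∨ i = 5 ∨ i = 6 ∨ i = n ∨
        (i ≠ 2 ∧ i ≠ 3 ∧ i ≠ 4 ∧ i ≠ 5 ∧ i ≠ 6 ∧ i ≠ n)) with
      rfl | rfl | rfl | rfl | rfl | rfl | ⟨h2, h3, h4, h5, h6, hn'⟩ <;>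
      simp (disch := omega) only [Perm.mul_apply, swap_apply_def, Fin.natCast_eq_natCast_iff_of_le,
        if_neg, if_true]
  have hmul : ρ * (swap ((2 : ℕ) : Fin (n + 1)) (5 : ℕ) * swap (n : Fin (n + 1)) (3 : ℕ)) =
      threeCycle ((4 : ℕ) : Fin (n + 1)) (6 : ℕ) (5 : ℕ) := by
    subst hρ
    refine Fin.perm_ext_natCast fun i hi => ?_
    rcases (by omega : i = 2 ∨ i = 3 ∨ i = 4 ∨ i = 5 ∨ i = 6 ∨ i = n ∨
        (i ≠ 2 ∧ i ≠ 3 ∧ i ≠ 4 ∧ i ≠ 5 ∧ i ≠ 6 ∧ i ≠ n)) with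
      rfl | rfl | rfl | rfl | rfl | rfl | ⟨h2, h3, h4, h5, h6, hn'⟩ <;>
      simp (disch := omega) only [threeCycle, Perm.mul_apply, swap_apply_def,
        Fin.natCast_eq_natCast_iff_of_le, if_neg, if_true]
  have hc_sq : q * ρ * q⁻¹ * (q * ρ * q⁻¹) =
      swap ((2 : ℕ) : Fin (n + 1)) (5 : ℕ) * swap (n : Fin (n + 1)) (3 : ℕ) := by
    rw [← hq2, ← hq6, ← hq4, ← hq5, swap_apply_apply, swap_apply_apply]
    calc q * ρ * q⁻¹ * (q * ρ * q⁻¹) = q * (ρ * ρ) * q⁻¹ := by group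
      _ = _ := by rw [hsq]; group
  rw [mul_assoc, hc_sq, hmul]

theorem threeCycle_two_six_five_mem (hn : 6 < n) {ρ : Perm (Fin (n + 1))}
    (hρ_eq : ρ = swap ((2 : ℕ) : Fin (n + 1)) (4 : ℕ) * swap ((4 : ℕ) : Fin (n + 1)) (6 : ℕ) *
        swap ((6 : ℕ) : Fin (n + 1)) (5 : ℕ) * swap ((3 : ℕ) : Fin (n + 1)) n)
    (hρ : ρ ∈ H) (h465 : threeCycle ((4 : ℕ) : Fin (n + 1)) (6 : ℕ) (5 : ℕ) ∈ H) :
    threeCycle ((2 : ℕ) : Fin (n + 1)) (6 : ℕ) (5 : ℕ) ∈ H := by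
  have hne : ∀ i j : ℕ, i ≤ n → j ≤ n → i ≠ j → (i : Fin (n + 1)) ≠ j := fun i j hi hj =>
    (Fin.natCast_eq_natCast_iff_of_le hi hj).not.mpr
  have h652 := threeCycle_conj_mem hρ h465
  rw [hρ_eq] at h652
  simp (disch := omega) only [Perm.mul_apply, swap_apply_def, Fin.natCast_eq_natCast_iff_of_le,
    if_neg, if_true] at h652
  rwa [threeCycle_rotate (hne 2 6 (by omega) (by omega) (by omega))
    (hne 6 5 (by omega) (by omega) (by omega)) (hne 5 2 (by omega) (by omega) (by omega))]

variable {a : Perm (Fin (n + 1))}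

theorem threeCycle_chain_mem (ha : a ∈ H) (ha4 : a (4 : ℕ) = (5 : ℕ))
    (ha_mid : ∀ i : ℕ, 5 ≤ i → i + 2 ≤ n → a i = (i + 2 : ℕ))
    (h465 : threeCycle ((4 : ℕ) : Fin (n + 1)) (6 : ℕ) (5 : ℕ) ∈ H) (m : ℕ)
    (hm : 2 * m + 8 ≤ n) :
    threeCycle ((2 * m + 5 : ℕ) : Fin (n + 1)) (2 * m + 8 : ℕ) (2 * m + 7 : ℕ) ∈ H := by
  induction m with
  | zero =>
    have h' := threeCycle_conj_mem ha h465
    rwa [ha4, ha_mid 6 (by omega) (by omega), ha_mid 5 (by omega) (by omega)] at h'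
  | succ m ih =>
    have h' := threeCycle_conj_mem ha (ih (by omega))
    rw [ha_mid _ (by omega) (by omega), ha_mid _ (by omega) (by omega),
      ha_mid _ (by omega) (by omega)] at h'
    convert h' using 3 <;> omega

theorem threeCycle_two_six_odd_mem
    (hchain : ∀ m : ℕ, 2 * m + 8 ≤ n →
      threeCycle ((2 * m + 5 : ℕ) : Fin (n + 1)) (2 * m + 8 : ℕ) (2 * m + 7 : ℕ) ∈ H)
    (h265 : threeCycle ((2 : ℕ) : Fin (n + 1)) (6 : ℕ) (5 : ℕ) ∈ H) (m : ℕ)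
    (hm : 2 * m + 5 < n) :
    threeCycle ((2 : ℕ) : Fin (n + 1)) (6 : ℕ) (2 * m + 5 : ℕ) ∈ H := by
  induction m with
  | zero => exact h265
  | succ m ih =>
    rw [show 2 * (m + 1) + 5 = 2 * m + 7 by ring]
    exact (threeCycle_mem_of_hub
      (Fin.nodup_map_natCast (l := [2, 6, 2 * m + 5, 2 * m + 8, 2 * m + 7]) (by simp)
        (by simp; omega)) (hchain m (by omega)) (ih (by omega))).2

theorem threeCycle_two_six_mem (hn : 7 < n) (heven : Even n) (ha : a ∈ H)
    (ha4 : a (4 : ℕ) = (5 : ℕ)) (ha_mid : ∀ i : ℕ, 5 ≤ i → i + 2 ≤ n → a i = (i + 2 : ℕ))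
    (ha_pred : a (n - 1 : ℕ) = (4 : ℕ)) (ha_top : a n = (3 : ℕ))
    (h465 : threeCycle ((4 : ℕ) : Fin (n + 1)) (6 : ℕ) (5 : ℕ) ∈ H)
    (h265 : threeCycle ((2 : ℕ) : Fin (n + 1)) (6 : ℕ) (5 : ℕ) ∈ H) {x : ℕ} (h3 : 3 ≤ x)
    (hx : x ≤ n) (h6 : x ≠ 6) : threeCycle ((2 : ℕ) : Fin (n + 1)) (6 : ℕ) x ∈ H := by
  have hchain := threeCycle_chain_mem ha ha4 ha_mid h465
  have hodd := threeCycle_two_six_odd_mem hchain h265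
  obtain ⟨k, rfl⟩ := heven
  have htop : threeCycle ((k + k - 1 : ℕ) : Fin (k + k + 1)) (3 : ℕ) (4 : ℕ) ∈ H := by
    have h' := threeCycle_conj_mem ha (hchain (k - 4) (by omega))
    rwa [show 2 * (k - 4) + 8 = k + k by omega, show 2 * (k - 4) + 7 = k + k - 1 by omega,
      ha_mid _ (by omega) (by omega), ha_top, ha_pred,
      show 2 * (k - 4) + 5 + 2 = k + k - 1 by omega] at h'
  have hlow := threeCycle_mem_of_hub
    (Fin.nodup_map_natCast (l := [2, 6, k + k - 1, 3, 4]) (by simp; omega) (by simp; omega)) htop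
    (by simpa [show 2 * (k - 3) + 5 = k + k - 1 by omega] using hodd (k - 3) (by omega))
  obtain ⟨m, rfl | rfl⟩ := Nat.even_or_odd' x
  · rcases (by omega : m = 2 ∨ 4 ≤ m) with rfl | hm
    · exact hlow.2
    · have hmem := (threeCycle_mem_of_hub
        (Fin.nodup_map_natCast (l := [2, 6, 2 * (m - 4) + 5, 2 * (m - 4) + 8, 2 * (m - 4) + 7])
          (by simp) (by simp; omega)) (hchain (m - 4) (by omega)) (hodd (m - 4) (by omega))).1
      simpa [show 2 * (m - 4) + 8 = 2 * m by omega] using hmem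
  · rcases (by omega : m = 1 ∨ 2 ≤ m) with rfl | hm
    · exact hlow.1
    · simpa [show 2 * (m - 2) + 5 = 2 * m + 1 by omega] using hodd (m - 2) (by omega)

theorem alternatingGroup_inf_fixingSubgroup_le_of_generators_mem (hn : 7 < n) (heven : Even n)
    {δ : Perm (Fin (n + 1))} (hδ : ∀ i : ℕ, 2 ≤ i → i < n → δ i = (i + 1 : ℕ))
    (hδn : δ n = (2 : ℕ)) (hδ₀ : ∀ x : Fin (n + 1), x.val < 2 → δ x = x)
    (ha : ((gammaCycle n)⁻¹ * δ) ^ 2 ∈ H) (hρ : rho (gammaCycle n) δ ∈ H)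
    (hc : (δ⁻¹ * gammaCycle n) * rho (gammaCycle n) δ * (δ⁻¹ * gammaCycle n)⁻¹ ∈ H) :
    alternatingGroup (Fin (n + 1)) ⊓
      fixingSubgroup (Perm (Fin (n + 1))) {x : Fin (n + 1) | x.val < 2} ≤ H := by
  have hρ_eq := rho_gammaCycle_eq hn hδ hδn hδ₀
  have h465 : threeCycle ((4 : ℕ) : Fin (n + 1)) (6 : ℕ) (5 : ℕ) ∈ H := by
    rw [← mul_conj_mul_conj_eq_threeCycle (by omega) hρ_eq (inv_mul_gammaCycle_apply hn hδ hδn)]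
    exact mul_mem (mul_mem hρ hc) hc
  have h265 := threeCycle_two_six_five_mem (by omega) hρ_eq hρ h465
  obtain ⟨ha4, ha_mid, ha_pred, ha_top⟩ := gammaCycle_inv_mul_sq_apply hn hδ hδn
  refine alternatingGroup_inf_fixingSubgroup_le
    ((Fin.natCast_eq_natCast_iff_of_le (i := 2) (j := 6) (by omega) (by omega)).not.mpr
      (by omega)) fun x (hx : ¬ x.val < 2) h2 h6 => ?_
  obtain ⟨i, hi, rfl⟩ := Fin.exists_natCast_eq x
  rw [Fin.val_cast_of_lt (by omega)] at hx
  have hi2 : i ≠ 2 := fun h => h2 (by rw [h])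
  exact threeCycle_two_six_mem hn heven ha ha4 ha_mid ha_pred ha_top h465 h265 (by omega) hi
    fun h => h6 (by rw [h])

end ThreeCycles

/-- Points are elements of `Fin (n + 1)`, with `0` unused, and a word `x₁⋯xₖ` of the paper
(composed from left to right) is the Lean product `xₖ * ⋯ * x₁`. -/
theorem stmt6 (n : ℕ) (hn : 7 < n) (heven : Even n)
    (γ δ : Equiv.Perm (Fin (n + 1)))
    (hγ₁ : γ 2 = 3) (hγ₂ : γ 3 = 5) (hγ₃ : γ 5 = 4) (hγ₄ : γ 4 = 2)
    (hγ₅ : ∀ x : Fin (n + 1), x ∉ ({2, 3, 4, 5} : Set (Fin (n + 1))) → γ x = x)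
    (hδ₁ : ∀ i : ℕ, 2 ≤ i → i < n → δ (i : Fin (n + 1)) = ((i + 1 : ℕ) : Fin (n + 1)))
    (hδ₂ : δ (n : Fin (n + 1)) = 2)
    (hδ₃ : ∀ x : Fin (n + 1), x.val < 2 → δ x = x)
    (σ : Equiv.Perm (Fin (n + 1))) :
    σ ∈ Subgroup.closure
      ({(γ⁻¹ * δ) ^ 2,
        γ⁻¹ * δ * γ⁻¹ * δ⁻¹ * γ * δ⁻¹ * γ * δ,
        (δ⁻¹ * γ) * (γ⁻¹ * δ * γ⁻¹ * δ⁻¹ * γ * δ⁻¹ * γ * δ) * (δ⁻¹ * γ)⁻¹} :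
        Set (Equiv.Perm (Fin (n + 1)))) ↔
    (Equiv.Perm.sign σ = 1 ∧ ∀ x : Fin (n + 1), x.val < 2 → σ x = x) := by
  obtain rfl := eq_gammaCycle (by omega) hγ₁ hγ₂ hγ₃ hγ₄ hγ₅
  replace hδ₂ : δ n = ((2 : ℕ) : Fin (n + 1)) := by simpa using hδ₂
  refine (SetLike.ext_iff.mp (le_antisymm
    (closure_le_alternatingGroup_inf_fixingSubgroup (gammaCycle_mem_fixingSubgroup (by omega))
      ((mem_fixingSubgroup_iff _).mpr hδ₃))
    (alternatingGroup_inf_fixingSubgroup_le_of_generators_mem hn heven hδ₁ hδ₂ hδ₃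
      (subset_closure (Set.mem_insert _ _))
      (subset_closure (Set.mem_insert_of_mem _ (Set.mem_insert _ _)))
      (subset_closure (Set.mem_insert_of_mem _ (Set.mem_insert_of_mem _ rfl))))) σ).trans ?_
  simp [mem_fixingSubgroup_iff, Perm.smul_def]
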